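/- Assume the antilinear system Σₐ is stabilizable, Q ∈ ℂ^{n×n} and R ∈ ℂ^{m×m} are Hermitian positive definite, and let P_N be the unique Hermitian positive definite solution of the normal Riccati equation −Q_N = A_N^H P_N A_N − P_N − A_N^H P_N B_N (R_N + B_N^H P_N B_N)^{-1} B_N^H P_N A_N. Then the iteration P_N(0) = Q_N, P_N(k+1) = Q_N + A_N^H (P_N(k)^{-1} + B_N R_N^{-1} B_N^H)^{-1} A_N is well defined (each P_N(k) is Hermitian positive definite) and P_N(k) → P_N entrywise as k → ∞. -/

import Mathlib

/-!
The Riccati map `f X = Q_N + A_Nᴴ (X⁻¹ + B_N R_N⁻¹ B_Nᴴ)⁻¹ A_N` is monotone for the Loewner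
order, because inversion is order-reversing on positive definite matrices, and by the Woodbury
identity its positive definite fixed points are exactly the positive definite solutions of the
normal Riccati equation. Since `Q_N ≤ f Q_N` and `f` fixes `P_N ≥ Q_N`, the iterates
`P_N(k) = f^[k] Q_N` increase and stay in the Loewner interval `[Q_N, P_N]`, which is compact;
a monotone sequence in a compact interval converges, its limit is a positive definite fixed
point of the continuous map `f`, hence equals `P_N` by uniqueness.
-/

open Matrix Filter Topology
open scoped ENNReal ComplexOrder

noncomputable section

/-- Entrywise complex conjugate of a matrix, `M^#`. -/
def mconj {k l : Type*} (A : Matrix k l ℂ) : Matrix k l ℂ := A.map (starRingEnd ℂ)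

variable {n m : ℕ}

/-- The antilinear system `x(k+1) = A₂^# x^#(k) + B₂^# u^#(k)` is stabilizable if some
feedback `u(k) = K₁x(k) + K₂^#x^#(k)` drives every closed-loop solution to zero. -/
def AntiStabilizable (A₂ : Matrix (Fin n) (Fin n) ℂ) (B₂ : Matrix (Fin n) (Fin m) ℂ) :
    Prop :=
  ∃ K₁ K₂ : Matrix (Fin m) (Fin n) ℂ, ∀ x : ℕ → (Fin n → ℂ),
    (∀ k : ℕ, x (k + 1) =
        mconj A₂ *ᵥ star (x k) + mconj B₂ *ᵥ star (K₁ *ᵥ x k + mconj K₂ *ᵥ star (x k))) →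
    Tendsto x atTop (𝓝 0)

/-- The trajectory of the antilinear system `x(k+1) = A₂^# x^#(k) + B₂^# u^#(k)` from
the initial condition `x₀` under the control sequence `u`. -/
def atraj (A₂ : Matrix (Fin n) (Fin n) ℂ) (B₂ : Matrix (Fin n) (Fin m) ℂ)
    (x₀ : Fin n → ℂ) (u : ℕ → Fin m → ℂ) : ℕ → Fin n → ℂ
  | 0 => x₀
  | k + 1 => mconj A₂ *ᵥ star (atraj A₂ B₂ x₀ u k) + mconj B₂ *ᵥ star (u k)

/-- The quadratic cost `J = Σ_k (x(k)^H Q x(k) + u(k)^H R u(k))`, valued in `[0,∞]`. -/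
def cost (Q : Matrix (Fin n) (Fin n) ℂ) (R : Matrix (Fin m) (Fin m) ℂ)
    (x : ℕ → Fin n → ℂ) (u : ℕ → Fin m → ℂ) : ℝ≥0∞ :=
  ∑' k : ℕ, ENNReal.ofReal ((star (x k) ⬝ᵥ (Q *ᵥ x k)).re + (star (u k) ⬝ᵥ (R *ᵥ u k)).re)

/-- The LQR problem for the antilinear system is solvable: for every initial condition
there is a control of finite cost minimizing the cost. -/
def LQRSolvable (A₂ : Matrix (Fin n) (Fin n) ℂ) (B₂ : Matrix (Fin n) (Fin m) ℂ)
    (Q : Matrix (Fin n) (Fin n) ℂ) (R : Matrix (Fin m) (Fin m) ℂ) : Prop :=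
  ∀ x₀ : Fin n → ℂ, ∃ u : ℕ → Fin m → ℂ,
    cost Q R (atraj A₂ B₂ x₀ u) u < ⊤ ∧
    ∀ u' : ℕ → Fin m → ℂ, cost Q R (atraj A₂ B₂ x₀ u) u ≤ cost Q R (atraj A₂ B₂ x₀ u') u'

/-- The anti-Riccati equation
`-Q = A₂^H P^# A₂ - A₂^H P^# B₂ (R + B₂^H P^# B₂)⁻¹ B₂^H P^# A₂ - P`. -/
def AntiRiccati (A₂ : Matrix (Fin n) (Fin n) ℂ) (B₂ : Matrix (Fin n) (Fin m) ℂ)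
    (Q : Matrix (Fin n) (Fin n) ℂ) (R : Matrix (Fin m) (Fin m) ℂ)
    (P : Matrix (Fin n) (Fin n) ℂ) : Prop :=
  -Q = A₂ᴴ * mconj P * A₂ -
      A₂ᴴ * mconj P * B₂ * (R + B₂ᴴ * mconj P * B₂)⁻¹ * (B₂ᴴ * mconj P * A₂) - P

/-- `A_N = A₂^# (I - B₂ (R + B₂^H Q^# B₂)⁻¹ B₂^H Q^#) A₂`. -/
def AN (A₂ : Matrix (Fin n) (Fin n) ℂ) (B₂ : Matrix (Fin n) (Fin m) ℂ)
    (Q : Matrix (Fin n) (Fin n) ℂ) (R : Matrix (Fin m) (Fin m) ℂ) :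
    Matrix (Fin n) (Fin n) ℂ :=
  mconj A₂ * (1 - B₂ * (R + B₂ᴴ * mconj Q * B₂)⁻¹ * B₂ᴴ * mconj Q) * A₂

/-- `B_N = [B₂^#, A₂^# B₂]`. -/
def BN (A₂ : Matrix (Fin n) (Fin n) ℂ) (B₂ : Matrix (Fin n) (Fin m) ℂ) :
    Matrix (Fin n) (Fin m ⊕ Fin m) ℂ :=
  Matrix.fromCols (mconj B₂) (mconj A₂ * B₂)

/-- `Q_N = Q + A₂^H (Q^{-#} + B₂ R⁻¹ B₂^H)⁻¹ A₂`. -/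
def QN (A₂ : Matrix (Fin n) (Fin n) ℂ) (B₂ : Matrix (Fin n) (Fin m) ℂ)
    (Q : Matrix (Fin n) (Fin n) ℂ) (R : Matrix (Fin m) (Fin m) ℂ) :
    Matrix (Fin n) (Fin n) ℂ :=
  Q + A₂ᴴ * ((mconj Q)⁻¹ + B₂ * R⁻¹ * B₂ᴴ)⁻¹ * A₂

/-- `R_N = diag(R^#, R + B₂^H Q^# B₂)`. -/
def RN (B₂ : Matrix (Fin n) (Fin m) ℂ)
    (Q : Matrix (Fin n) (Fin n) ℂ) (R : Matrix (Fin m) (Fin m) ℂ) :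
    Matrix (Fin m ⊕ Fin m) (Fin m ⊕ Fin m) ℂ :=
  Matrix.fromBlocks (mconj R) 0 0 (R + B₂ᴴ * mconj Q * B₂)

/-- The normal Riccati equation
`-Q_N = A_N^H P A_N - P - A_N^H P B_N (R_N + B_N^H P B_N)⁻¹ B_N^H P A_N`. -/
def NormalRiccati (A₂ : Matrix (Fin n) (Fin n) ℂ) (B₂ : Matrix (Fin n) (Fin m) ℂ)
    (Q : Matrix (Fin n) (Fin n) ℂ) (R : Matrix (Fin m) (Fin m) ℂ)
    (P : Matrix (Fin n) (Fin n) ℂ) : Prop :=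
  -(QN A₂ B₂ Q R) =
    (AN A₂ B₂ Q R)ᴴ * P * AN A₂ B₂ Q R - P -
      (AN A₂ B₂ Q R)ᴴ * P * BN A₂ B₂ *
        (RN B₂ Q R + (BN A₂ B₂)ᴴ * P * BN A₂ B₂)⁻¹ *
        ((BN A₂ B₂)ᴴ * P * AN A₂ B₂ Q R)

/-- The normal Riccati iteration `P_N(0) = Q_N`,
`P_N(k+1) = Q_N + A_N^H (P_N(k)⁻¹ + B_N R_N⁻¹ B_N^H)⁻¹ A_N`. -/
def normalIter (A₂ : Matrix (Fin n) (Fin n) ℂ) (B₂ : Matrix (Fin n) (Fin m) ℂ)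
    (Q : Matrix (Fin n) (Fin n) ℂ) (R : Matrix (Fin m) (Fin m) ℂ) :
    ℕ → Matrix (Fin n) (Fin n) ℂ
  | 0 => QN A₂ B₂ Q R
  | k + 1 => QN A₂ B₂ Q R +
      (AN A₂ B₂ Q R)ᴴ *
        ((normalIter A₂ B₂ Q R k)⁻¹ + BN A₂ B₂ * (RN B₂ Q R)⁻¹ * (BN A₂ B₂)ᴴ)⁻¹ *
        AN A₂ B₂ Q R

open scoped MatrixOrder

section MonotoneConvergence

variable {α ι : Type*} [TopologicalSpace α] [PartialOrder α] [OrderClosedTopology α] [Preorder ι]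

theorem Monotone.le_of_mapClusterPt {f : ι → α} (hf : Monotone f) {x : α}
    (hx : MapClusterPt x atTop f) (i : ι) : f i ≤ x :=
  isClosed_Ici.mem_of_mapClusterPt hx ((eventually_ge_atTop i).mono fun _ hj => hf hj)

-- Every cluster point is an upper bound of the sequence, so any two cluster points coincide.
theorem Monotone.exists_tendsto_of_mem_Icc [IsDirectedOrder ι] [Nonempty ι] [CompactIccSpace α]
    {f : ι → α} (hf : Monotone f) {a b : α} (hab : ∀ i, f i ∈ Set.Icc a b) :
    ∃ y, Tendsto f atTop (𝓝 y) := by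
  have hmem : ∀ᶠ i in atTop, f i ∈ Set.Icc a b := Eventually.of_forall hab
  obtain ⟨y, -, hy⟩ := isCompact_Icc.exists_mapClusterPt (tendsto_principal.2 hmem)
  refine ⟨y, isCompact_Icc.tendsto_nhds_of_unique_mapClusterPt hmem fun x _ hx => ?_⟩
  have hle {u v : α} (hu : MapClusterPt u atTop f) (hv : MapClusterPt v atTop f) : u ≤ v :=
    isClosed_Iic.mem_of_mapClusterPt hu (Eventually.of_forall (hf.le_of_mapClusterPt hv))
  exact le_antisymm (hle hx hy) (hle hy hx)

end MonotoneConvergence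

namespace Matrix

variable {p q : Type*}

theorem PosDef.of_le {X Y : Matrix p p ℂ} (hX : X.PosDef) (h : X ≤ Y) : Y.PosDef := by
  simpa using hX.add_posSemidef h

theorem PosDef.mconj {M : Matrix p p ℂ} (hM : M.PosDef) : (_root_.mconj M).PosDef := by
  have h : _root_.mconj M = Mᴴᵀ := rfl
  rw [h, hM.isHermitian.eq]
  exact hM.transpose

variable [Fintype p] [DecidableEq p] [Fintype q] [DecidableEq q]

-- The L2 operator norm makes matrices a C⋆-algebra without changing their topology.
open scoped Norms.L2Operator in
instance : OrderClosedTopology (Matrix p p ℂ) := inferInstance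

open scoped Norms.L2Operator in
instance : CompactIccSpace (Matrix p p ℂ) where
  isCompact_Icc {A B} := by
    refine (isCompact_closedBall A ‖B - A‖).of_isClosed_subset isClosed_Icc fun X hX => ?_
    rw [Metric.mem_closedBall, dist_eq_norm]
    exact CStarAlgebra.norm_le_norm_of_nonneg_of_le (sub_nonneg.2 hX.1) (sub_le_sub_right hX.2 A)

open scoped Norms.L2Operator in
theorem PosDef.inv_le_inv {X Y : Matrix p p ℂ} (hX : X.PosDef) (h : X ≤ Y) : Y⁻¹ ≤ X⁻¹ := by
  lift Y to (Matrix p p ℂ)ˣ using (hX.of_le h).isUnit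
  lift X to (Matrix p p ℂ)ˣ using hX.isUnit
  simpa [coe_units_inv] using CStarAlgebra.inv_le_inv hX.posSemidef.nonneg h

theorem PosDef.continuousAt_inv {X : Matrix p p ℂ} (hX : X.PosDef) : ContinuousAt Inv.inv X :=
  continuousAt_matrix_inv X <| by
    rw [Ring.inverse_eq_inv']
    exact continuousAt_inv₀ hX.det_pos.ne'

theorem PosDef.fromBlocks_zero {D₁ : Matrix p p ℂ} {D₂ : Matrix q q ℂ} (h₁ : D₁.PosDef)
    (h₂ : D₂.PosDef) : (fromBlocks D₁ 0 0 D₂).PosDef := by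
  have := h₁.isUnit.invertible
  have hpsd : (fromBlocks D₁ 0 0 D₂).PosSemidef := by
    simpa using (PosDef.fromBlocks₁₁ 0 D₂ h₁).2 (by simpa using h₂.posSemidef)
  rw [hpsd.posDef_iff_isUnit, isUnit_iff_isUnit_det, det_fromBlocks_zero₂₁]
  exact (isUnit_iff_isUnit_det _ |>.1 h₁.isUnit).mul (isUnit_iff_isUnit_det _ |>.1 h₂.isUnit)

end Matrix

section RiccatiMap

variable {p q : Type*} [Fintype p] [DecidableEq p] [Fintype q] [DecidableEq q]
  {A : Matrix p p ℂ} {B : Matrix p q ℂ} {Q : Matrix p p ℂ} {R : Matrix q q ℂ}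

def riccatiMap (A : Matrix p p ℂ) (B : Matrix p q ℂ) (Q : Matrix p p ℂ) (R : Matrix q q ℂ)
    (X : Matrix p p ℂ) : Matrix p p ℂ :=
  Q + Aᴴ * (X⁻¹ + B * R⁻¹ * Bᴴ)⁻¹ * A

theorem posDef_inv_add_mul_inv_mul_conjTranspose (hR : R.PosDef) {X : Matrix p p ℂ}
    (hX : X.PosDef) : (X⁻¹ + B * R⁻¹ * Bᴴ).PosDef :=
  hX.inv.add_posSemidef (hR.inv.posSemidef.mul_mul_conjTranspose_same B)

theorem le_riccatiMap (hR : R.PosDef) {X : Matrix p p ℂ} (hX : X.PosDef) :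
    Q ≤ riccatiMap A B Q R X := by
  rw [le_iff, riccatiMap, add_sub_cancel_left]
  exact (posDef_inv_add_mul_inv_mul_conjTranspose hR hX).inv.posSemidef
    |>.conjTranspose_mul_mul_same A

theorem riccatiMap_posDef (hQ : Q.PosDef) (hR : R.PosDef) {X : Matrix p p ℂ} (hX : X.PosDef) :
    (riccatiMap A B Q R X).PosDef :=
  hQ.of_le (le_riccatiMap hR hX)

theorem riccatiMap_mono (hR : R.PosDef) {X Y : Matrix p p ℂ} (hX : X.PosDef) (h : X ≤ Y) :
    riccatiMap A B Q R X ≤ riccatiMap A B Q R Y := by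
  have hY := hX.of_le h
  have hinv : Y⁻¹ + B * R⁻¹ * Bᴴ ≤ X⁻¹ + B * R⁻¹ * Bᴴ := add_le_add_left (hX.inv_le_inv h) _
  have := (posDef_inv_add_mul_inv_mul_conjTranspose hR hY).inv_le_inv hinv
  simpa only [riccatiMap, star_eq_conjTranspose] using
    add_le_add_right (star_left_conjugate_le_conjugate this A) Q

theorem continuousAt_riccatiMap (hR : R.PosDef) {X : Matrix p p ℂ} (hX : X.PosDef) :
    ContinuousAt (riccatiMap A B Q R) X := by
  have hinner : ContinuousAt (fun Y : Matrix p p ℂ => Y⁻¹ + B * R⁻¹ * Bᴴ) X :=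
    hX.continuousAt_inv.add continuousAt_const
  have houter := (posDef_inv_add_mul_inv_mul_conjTranspose hR hX).continuousAt_inv.comp
    (f := fun Y : Matrix p p ℂ => Y⁻¹ + B * R⁻¹ * Bᴴ) hinner
  exact continuousAt_const.add ((continuousAt_const.mul houter).mul continuousAt_const)

-- Woodbury identity.
theorem inv_add_mul_inv_mul_conjTranspose_inv (hR : R.PosDef) {X : Matrix p p ℂ}
    (hX : X.PosDef) :
    (X⁻¹ + B * R⁻¹ * Bᴴ)⁻¹ = X - X * B * (R + Bᴴ * X * B)⁻¹ * Bᴴ * X := by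
  have hXX : X⁻¹⁻¹ = X := nonsing_inv_nonsing_inv X (isUnit_iff_isUnit_det X |>.1 hX.isUnit)
  have hRR : R⁻¹⁻¹ = R := nonsing_inv_nonsing_inv R (isUnit_iff_isUnit_det R |>.1 hR.isUnit)
  have hG : IsUnit (R⁻¹⁻¹ + Bᴴ * X⁻¹⁻¹ * B) := by
    rw [hXX, hRR]
    exact (hR.add_posSemidef (hX.posSemidef.conjTranspose_mul_mul_same B)).isUnit
  rw [add_mul_mul_inv_eq_sub X⁻¹ B R⁻¹ Bᴴ hX.inv.isUnit hR.inv.isUnit hG, hXX, hRR]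

theorem riccati_iff_riccatiMap_eq (hR : R.PosDef) {X : Matrix p p ℂ} (hX : X.PosDef) :
    -Q = Aᴴ * X * A - X - Aᴴ * X * B * (R + Bᴴ * X * B)⁻¹ * (Bᴴ * X * A) ↔
      riccatiMap A B Q R X = X := by
  have hexpand : Q + Aᴴ * (X - X * B * (R + Bᴴ * X * B)⁻¹ * Bᴴ * X) * A - X =
      Q + (Aᴴ * X * A - X - Aᴴ * X * B * (R + Bᴴ * X * B)⁻¹ * (Bᴴ * X * A)) := by
    simp only [Matrix.mul_sub, Matrix.sub_mul, Matrix.mul_assoc]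
    abel
  rw [riccatiMap, inv_add_mul_inv_mul_conjTranspose_inv hR hX, ← sub_eq_zero (b := X), hexpand,
    add_eq_zero_iff_neg_eq]

open Function

theorem riccatiMap_iterate_posDef (hQ : Q.PosDef) (hR : R.PosDef) (k : ℕ) :
    ((riccatiMap A B Q R)^[k] Q).PosDef := by
  induction k with
  | zero => exact hQ
  | succ k ih => rw [iterate_succ_apply']; exact riccatiMap_posDef hQ hR ih

theorem monotone_riccatiMap_iterate (hQ : Q.PosDef) (hR : R.PosDef) :
    Monotone fun k => (riccatiMap A B Q R)^[k] Q := by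
  refine monotone_nat_of_le_succ fun k => ?_
  induction k with
  | zero => exact le_riccatiMap hR hQ
  | succ k ih =>
    simpa only [iterate_succ_apply'] using
      riccatiMap_mono hR (riccatiMap_iterate_posDef hQ hR k) ih

theorem riccatiMap_iterate_le (hQ : Q.PosDef) (hR : R.PosDef) {P : Matrix p p ℂ}
    (hP : P.PosDef) (hfix : riccatiMap A B Q R P = P) (k : ℕ) :
    (riccatiMap A B Q R)^[k] Q ≤ P := by
  induction k with
  | zero => exact hfix ▸ le_riccatiMap hR hP
  | succ k ih =>
    rw [iterate_succ_apply', ← hfix]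
    exact riccatiMap_mono hR (riccatiMap_iterate_posDef hQ hR k) ih

theorem exists_tendsto_riccatiMap_iterate (hQ : Q.PosDef) (hR : R.PosDef) {P : Matrix p p ℂ}
    (hP : P.PosDef) (hfix : riccatiMap A B Q R P = P) :
    ∃ L : Matrix p p ℂ, L.PosDef ∧ riccatiMap A B Q R L = L ∧
      Tendsto (fun k => (riccatiMap A B Q R)^[k] Q) atTop (𝓝 L) := by
  have hmono := monotone_riccatiMap_iterate (A := A) (B := B) hQ hR
  have hQle (k : ℕ) : Q ≤ (riccatiMap A B Q R)^[k] Q := hmono k.zero_le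
  obtain ⟨L, hL⟩ := hmono.exists_tendsto_of_mem_Icc fun k =>
    ⟨hQle k, riccatiMap_iterate_le hQ hR hP hfix k⟩
  have hLpos : L.PosDef := hQ.of_le (ge_of_tendsto' hL hQle)
  have hnext : Tendsto (fun k => riccatiMap A B Q R ((riccatiMap A B Q R)^[k] Q)) atTop
      (𝓝 L) := by
    simpa only [comp_def, iterate_succ_apply'] using hL.comp (tendsto_add_atTop_nat 1)
  exact ⟨L, hLpos,
    tendsto_nhds_unique ((continuousAt_riccatiMap hR hLpos).tendsto.comp hL) hnext, hL⟩

end RiccatiMap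

section NormalRiccati

variable {A₂ : Matrix (Fin n) (Fin n) ℂ} {B₂ : Matrix (Fin n) (Fin m) ℂ}
  {Q : Matrix (Fin n) (Fin n) ℂ} {R : Matrix (Fin m) (Fin m) ℂ}

theorem QN_eq_riccatiMap : QN A₂ B₂ Q R = riccatiMap A₂ B₂ Q R (mconj Q) := rfl

theorem QN_posDef (hQ : Q.PosDef) (hR : R.PosDef) : (QN A₂ B₂ Q R).PosDef :=
  QN_eq_riccatiMap ▸ riccatiMap_posDef hQ hR hQ.mconj

theorem RN_posDef (hQ : Q.PosDef) (hR : R.PosDef) : (RN B₂ Q R).PosDef :=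
  hR.mconj.fromBlocks_zero (hR.add_posSemidef (hQ.mconj.posSemidef.conjTranspose_mul_mul_same B₂))

theorem normalRiccati_iff (hQ : Q.PosDef) (hR : R.PosDef) {P : Matrix (Fin n) (Fin n) ℂ}
    (hP : P.PosDef) :
    NormalRiccati A₂ B₂ Q R P ↔
      riccatiMap (AN A₂ B₂ Q R) (BN A₂ B₂) (QN A₂ B₂ Q R) (RN B₂ Q R) P = P :=
  riccati_iff_riccatiMap_eq (RN_posDef hQ hR) hP

theorem normalIter_eq_iterate (k : ℕ) :
    normalIter A₂ B₂ Q R k =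
      (riccatiMap (AN A₂ B₂ Q R) (BN A₂ B₂) (QN A₂ B₂ Q R) (RN B₂ Q R))^[k] (QN A₂ B₂ Q R) := by
  induction k with
  | zero => rfl
  | succ k ih => rw [Function.iterate_succ_apply', ← ih]; rfl

end NormalRiccati

theorem normalIter_tendsto_general
    (A₂ : Matrix (Fin n) (Fin n) ℂ) (B₂ : Matrix (Fin n) (Fin m) ℂ)
    (Q : Matrix (Fin n) (Fin n) ℂ) (R : Matrix (Fin m) (Fin m) ℂ)
    (hQ : Q.PosDef) (hR : R.PosDef)
    (P : Matrix (Fin n) (Fin n) ℂ) (hP : P.PosDef ∧ NormalRiccati A₂ B₂ Q R P)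
    (huniq : ∀ P' : Matrix (Fin n) (Fin n) ℂ,
      P'.PosDef ∧ NormalRiccati A₂ B₂ Q R P' → P' = P) :
    (∀ k : ℕ, (normalIter A₂ B₂ Q R k).PosDef) ∧
    Tendsto (fun k => normalIter A₂ B₂ Q R k) atTop (𝓝 P) := by
  simp only [normalIter_eq_iterate]
  obtain ⟨L, hL, hfix, hlim⟩ := exists_tendsto_riccatiMap_iterate (QN_posDef hQ hR)
    (RN_posDef hQ hR) hP.1 ((normalRiccati_iff hQ hR hP.1).1 hP.2)
  obtain rfl : L = P := huniq L ⟨hL, (normalRiccati_iff hQ hR hL).2 hfix⟩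
  exact ⟨riccatiMap_iterate_posDef (QN_posDef hQ hR) (RN_posDef hQ hR), hlim⟩

/-- If the antilinear system is stabilizable and `P_N` is the unique
Hermitian positive definite solution of the normal Riccati equation, then the normal
Riccati iteration is well defined (each iterate is Hermitian positive definite) and
converges to `P_N` entrywise. -/
theorem normalIter_tendsto
    (A₂ : Matrix (Fin n) (Fin n) ℂ) (B₂ : Matrix (Fin n) (Fin m) ℂ)
    (Q : Matrix (Fin n) (Fin n) ℂ) (R : Matrix (Fin m) (Fin m) ℂ)
    (hQ : Q.PosDef) (hR : R.PosDef)
    (hstab : AntiStabilizable A₂ B₂)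
    (P : Matrix (Fin n) (Fin n) ℂ) (hP : P.PosDef ∧ NormalRiccati A₂ B₂ Q R P)
    (huniq : ∀ P' : Matrix (Fin n) (Fin n) ℂ,
      P'.PosDef ∧ NormalRiccati A₂ B₂ Q R P' → P' = P) :
    (∀ k : ℕ, (normalIter A₂ B₂ Q R k).PosDef) ∧
    Tendsto (fun k => normalIter A₂ B₂ Q R k) atTop (𝓝 P) :=
  normalIter_tendsto_general A₂ B₂ Q R hQ hR P hP huniq
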